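/- arXiv:math/0608450 — 2 statements merged into one kernel-verified Lean document; each statement's English description precedes it below -/
import Mathlib

section
/- Let X and Y be partially ordered sets, let φ : X → Y be an order embedding, let F ⊆ Y be a cut, and let A be a cut of X with φ^#(A) = F. Then A = ( ⋃ {U | U a cut of X with φ^#(U) ⊆ F} )^{ul}, i.e. A is the supremum in the cut completion of X of the family of cuts U with φ^#(U) ⊆ F. -/
/-- `ul A = (A^u)^l`: the lower bounds of the set of upper bounds of `A`. -/
def ul {X : Type*} [PartialOrder X] (A : Set X) : Set X :=
  lowerBounds (upperBounds A)

/-- `A` is a cut if `A^{ul} = A`. -/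
def IsCut {X : Type*} [PartialOrder X] (A : Set X) : Prop :=
  ul A = A

/-- `φ^#(A) = (φ(A))^{ul}`. -/
def sharp {X Y : Type*} [PartialOrder X] [PartialOrder Y] (φ : X → Y) (A : Set X) : Set Y :=
  ul (φ '' A)

lemma ul_mono {X : Type*} [PartialOrder X] {A B : Set X} (h : A ⊆ B) : ul A ⊆ ul B :=
  lowerBounds_mono_set (upperBounds_mono_set h)

theorem stmt3 {X Y : Type*} [PartialOrder X] [PartialOrder Y] (φ : X → Y)
    (hφ : ∀ a b : X, φ a ≤ φ b ↔ a ≤ b) (F : Set Y) (hF : IsCut F)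
    (A : Set X) (hA : IsCut A) (hAF : sharp φ A = F) :
    A = ul (⋃₀ {U : Set X | IsCut U ∧ sharp φ U ⊆ F}) := by
  have hsub : ⋃₀ {U : Set X | IsCut U ∧ sharp φ U ⊆ F} ⊆ A := by
    rintro u ⟨U, ⟨hU, hUF⟩, huU⟩
    have hφu : φ u ∈ sharp φ A := by
      rw [hAF]
      apply hUF
      intro b hb
      exact hb ⟨u, huU, rfl⟩
    rw [← hA]
    intro b hb
    have : φ u ≤ φ b := hφu (fun y ⟨x, hx, hxy⟩ => hxy ▸ (hφ x b).mpr (hb hx))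
    exact (hφ u b).mp this
  apply le_antisymm
  · have : A ⊆ ⋃₀ {U : Set X | IsCut U ∧ sharp φ U ⊆ F} :=
      Set.subset_sUnion_of_mem ⟨hA, hAF ▸ le_rfl⟩
    calc A = ul A := hA.symm
      _ ⊆ _ := ul_mono this
  · calc ul _ ⊆ ul A := ul_mono hsub
      _ = A := hA
end

section
/- Let X and Y be partially ordered sets, let φ : X → Y be an order embedding, let F ⊆ Y be a cut, and let A be a cut of X with φ^#(A) = F. Then A = ⋂ {V | V a cut of X with F ⊆ φ^#(V)}, i.e. A is the infimum in the cut completion of X of the family of cuts V with F ⊆ φ^#(V). -/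
lemma upperBounds_ul {X : Type*} [PartialOrder X] (S : Set X) :
    upperBounds (ul S) = upperBounds S := by
  apply Set.Subset.antisymm
  · intro b hb x hx
    exact hb (fun y hy => hy hx)
  · intro b hb x hx
    exact hx hb

theorem stmt4 {X Y : Type*} [PartialOrder X] [PartialOrder Y] (φ : X → Y)
    (hφ : ∀ a b : X, φ a ≤ φ b ↔ a ≤ b) (F : Set Y) (hF : IsCut F)
    (A : Set X) (hA : IsCut A) (hAF : sharp φ A = F) :
    A = ⋂₀ {V : Set X | IsCut V ∧ F ⊆ sharp φ V} := by
  apply Set.Subset.antisymm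
  · intro a ha V hV
    obtain ⟨hVcut, hFV⟩ := hV
    rw [← hVcut]
    intro b hb
    -- b ∈ upperBounds V; show a ≤ b
    have hφb : φ b ∈ upperBounds (φ '' V) := by
      rintro _ ⟨v, hv, rfl⟩
      exact (hφ v b).mpr (hb hv)
    have h1 : φ b ∈ upperBounds (sharp φ V) := by
      rw [sharp, upperBounds_ul]; exact hφb
    have h2 : φ b ∈ upperBounds F := upperBounds_mono_set hFV h1
    have h3 : φ b ∈ upperBounds (φ '' A) := by
      rw [← hAF, sharp, upperBounds_ul] at h2
      exact h2
    have : φ a ≤ φ b := h3 ⟨a, ha, rfl⟩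
    exact (hφ a b).mp this
  · intro x hx
    exact hx A ⟨hA, hAF ▸ Set.Subset.refl _⟩
end
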